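/- arXiv:1706.05595 — 2 statements merged into one kernel-verified Lean document; each statement's English description precedes it below -/
import Mathlib

section
/- For every Hist T of the Petersen graph, the subgraph P - E(T) is a single cycle of length 6. -/
/-!
A Hist `T` of the Petersen graph `P` has `9` of its `15` edges. Since `P` is cubic and every
vertex has degree `1` or `3` in `T`, every vertex has degree `0` or `2` in `D = P \ T`, so `D` is
a disjoint union of cycles with `6` edges in total. The girth of `P` is `5`: it is triangle-free,
and two distinct `2`-subsets of `Fin 5` cover at least three points, so they have at most one
common neighbour. Two edge-disjoint cycles of `D` would therefore need `10` edges, hence `D` is a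
single cycle through all its `6` edges.
-/

open SimpleGraph

/-- The Petersen graph as the Kneser graph K(5,2). -/
def petersen : SimpleGraph {s : Finset (Fin 5) // s.card = 2} where
  Adj a b := Disjoint a.1 b.1
  symm := ⟨fun a b h => h.symm⟩
  loopless := ⟨fun a h => by
    have h2 : a.1 = ⊥ := disjoint_self.mp h
    have hc := a.2
    rw [h2] at hc
    simp at hc⟩

namespace SimpleGraph

variable {V : Type*} {G : SimpleGraph V}

lemma Walk.IsTrail.ncard_edgeSet {u v : V} {p : G.Walk u v} (hp : p.IsTrail) :
    p.edgeSet.ncard = p.length := by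
  classical
  rw [← Walk.coe_edges_toFinset, Set.ncard_coe_finset,
    List.toFinset_card_of_nodup hp.edges_nodup, Walk.length_edges]

lemma Walk.length_add_length_le_ncard_edgeSet [Finite V] {u v w x : V} {p : G.Walk u v}
    {q : G.Walk w x} (hp : p.IsTrail) (hq : q.IsTrail) (hpq : Disjoint p.edgeSet q.edgeSet) :
    p.length + q.length ≤ G.edgeSet.ncard := by
  rw [← hp.ncard_edgeSet, ← hq.ncard_edgeSet, ← Set.ncard_union_eq hpq]
  exact Set.ncard_le_ncard (Set.union_subset (fun _ h ↦ p.edges_subset_edgeSet h)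
    fun _ h ↦ q.edges_subset_edgeSet h)

lemma IsCycles.exists_isCycle_mem_edges [Finite V] (hG : G.IsCycles) {v w : V} (h : G.Adj v w) :
    ∃ (u : V) (p : G.Walk u u), p.IsCycle ∧ s(v, w) ∈ p.edges :=
  adj_and_reachable_delete_edges_iff_exists_cycle.mp ⟨h, hG.reachable_deleteEdges h⟩

lemma Walk.IsCycle.mem_edges_of_isCycles [Finite V] {u v w : V} {p : G.Walk u u}
    (hp : p.IsCycle) (hG : G.IsCycles) (hv : v ∈ p.support) (h : G.Adj v w) :
    s(v, w) ∈ p.edges := by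
  classical
  have := Fintype.ofFinite V
  rw [← Walk.mem_edges_toSubgraph, Subgraph.mem_edgeSet,
    hp.adj_toSubgraph_iff_of_isCycles hG (p.mem_verts_toSubgraph.mpr hv)]
  exact h

lemma Walk.IsCycle.isCycles_deleteEdges [Finite V] {u : V} {p : G.Walk u u} (hp : p.IsCycle)
    (hG : G.IsCycles) : (G.deleteEdges p.edgeSet).IsCycles := by
  rintro v ⟨w, hvw⟩
  rw [mem_neighborSet, deleteEdges_adj] at hvw
  have hv : v ∉ p.support := fun hv ↦ hvw.2 (hp.mem_edges_of_isCycles hG hv hvw.1)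
  have hnbr : (G.deleteEdges p.edgeSet).neighborSet v = G.neighborSet v := by
    ext x
    simp only [mem_neighborSet, deleteEdges_adj, Walk.mem_edgeSet, and_iff_left_iff_imp]
    exact fun _ he ↦ hv (p.fst_mem_support_of_mem_edges he)
  rw [hnbr]
  exact hG ⟨w, hvw.1⟩

lemma IsCycles.exists_isCycle_edgeSet_eq [Finite V] (hG : G.IsCycles) (hne : G.edgeSet.Nonempty)
    {n : ℕ} (hn : n ≤ G.egirth) (hcard : G.edgeSet.ncard < 2 * n) :
    ∃ (u : V) (p : G.Walk u u), p.IsCycle ∧ G.edgeSet = p.edgeSet := by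
  obtain ⟨e, he⟩ := hne
  induction e using Sym2.ind with | _ v w => ?_
  obtain ⟨u, p, hp, -⟩ := hG.exists_isCycle_mem_edges he
  refine ⟨u, p, hp, Set.Subset.antisymm (fun e he ↦ ?_) fun _ h ↦ p.edges_subset_edgeSet h⟩
  by_contra hep
  induction e using Sym2.ind with | _ x y => ?_
  obtain ⟨u', q, hq, -⟩ :=
    (hp.isCycles_deleteEdges hG).exists_isCycle_mem_edges (deleteEdges_adj.mpr ⟨he, hep⟩)
  set q' := q.mapLe (G.deleteEdges_le p.edgeSet)
  have hq' : q'.IsCycle := hq.mapLe _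
  have hdisj : Disjoint p.edgeSet q'.edgeSet := by
    rw [Walk.edgeSet_mapLe_eq_edgeSet, Set.disjoint_right]
    exact fun e he ↦ (edgeSet_deleteEdges p.edgeSet ▸ q.edges_subset_edgeSet he).2
  have hlen := Walk.length_add_length_le_ncard_edgeSet hp.isTrail hq'.isTrail hdisj
  have hpn := (le_egirth.mp hn) _ _ hp
  have hqn := (le_egirth.mp hn) _ _ hq'
  norm_cast at hpn hqn
  omega

lemma Walk.IsCycle.five_le_length (h3 : G.CliqueFree 3)
    (h4 : ∀ v w, v ≠ w → (G.commonNeighbors v w).Subsingleton) {u : V} {p : G.Walk u u}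
    (hp : p.IsCycle) : 5 ≤ p.length := by
  have hadj : ∀ i < p.length, G.Adj (p.getVert i) (p.getVert (i + 1)) :=
    fun _ hi ↦ p.adj_getVert_succ hi
  by_contra! hlt
  obtain hlen3 | hlen4 : p.length = 3 ∨ p.length = 4 := by
    have := hp.three_le_length
    omega
  · obtain ⟨s, hs⟩ := is3Clique_iff_exists_cycle_length_three.mpr ⟨u, p, hp, hlen3⟩
    exact h3 s hs
  · have hend : p.getVert 4 = p.getVert 0 := by rw [← hlen4, p.getVert_length, p.getVert_zero]
    have h02 : p.getVert 0 ≠ p.getVert 2 := fun h ↦ by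
      have := hp.getVert_injOn' (by simp [hlen4]) (by simp [hlen4]) h
      omega
    have h13 : p.getVert 1 ≠ p.getVert 3 := fun h ↦ by
      have := hp.getVert_injOn' (by simp [hlen4]) (by simp [hlen4]) h
      omega
    refine h13 (h4 _ _ h02 ?_ ?_)
    · exact ⟨hadj 0 (by omega), (hadj 1 (by omega)).symm⟩
    · exact ⟨hend ▸ (hadj 3 (by omega)).symm, hadj 2 (by omega)⟩

lemma five_le_egirth_of_cliqueFree_three (h3 : G.CliqueFree 3)
    (h4 : ∀ v w, v ≠ w → (G.commonNeighbors v w).Subsingleton) : 5 ≤ G.egirth :=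
  le_egirth.mpr fun _ _ hp ↦ by exact_mod_cast hp.five_le_length h3 h4

lemma IsTree.ncard_edgeSet [Finite V] (hG : G.IsTree) : G.edgeSet.ncard + 1 = Nat.card V := by
  classical
  have := Fintype.ofFinite V
  rw [Nat.card_eq_fintype_card, ← hG.card_edgeFinset, ← Set.ncard_coe_finset, coe_edgeFinset]

lemma isCycles_sdiff_of_ncard_neighborSet [Finite V] {H : SimpleGraph V}
    (hG : ∀ v, (G.neighborSet v).ncard = 3) (hH : H ≤ G)
    (hdeg : ∀ v, (H.neighborSet v).ncard = 1 ∨ (H.neighborSet v).ncard = 3) :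
    (G \ H).IsCycles := by
  intro v hv
  have hpos := hv.ncard_pos
  rw [neighborSet_sdiff, Set.ncard_sdiff (neighborSet_mono hH v), hG] at hpos ⊢
  have := hdeg v
  omega

end SimpleGraph

abbrev PetersenVertex := {s : Finset (Fin 5) // s.card = 2}

instance : DecidableRel petersen.Adj := fun a b ↦ inferInstanceAs (Decidable (Disjoint a.1 b.1))

lemma card_petersenVertex : Fintype.card PetersenVertex = 10 := by decide

lemma petersen_degree (v : PetersenVertex) : petersen.degree v = 3 := by
  revert v
  decide

lemma petersen_ncard_neighborSet (v : PetersenVertex) : (petersen.neighborSet v).ncard = 3 := by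
  rw [Set.ncard_eq_toFinset_card', ← neighborFinset_def, card_neighborFinset_eq_degree,
    petersen_degree]

lemma petersen_ncard_edgeSet : petersen.edgeSet.ncard = 15 := by
  have h := petersen.sum_degrees_eq_twice_card_edges
  simp only [petersen_degree, Finset.sum_const, Finset.card_univ, card_petersenVertex,
    smul_eq_mul] at h
  rw [← Set.ncard_coe_finset, coe_edgeFinset] at h
  omega

lemma petersen_cliqueFree_three : petersen.CliqueFree 3 := by
  intro s hs
  obtain ⟨a, b, c, hab, hac, hbc, -⟩ := is3Clique_iff.mp hs
  have hunion : (a.1 ∪ b.1 ∪ c.1).card = 6 := by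
    rw [Finset.card_union_of_disjoint (Finset.disjoint_union_left.mpr ⟨hac, hbc⟩),
      Finset.card_union_of_disjoint hab, a.2, b.2, c.2]
  have := Finset.card_le_univ (a.1 ∪ b.1 ∪ c.1)
  rw [hunion, Fintype.card_fin] at this
  omega

lemma petersen_commonNeighbors_subsingleton (a c : PetersenVertex) (hac : a ≠ c) :
    (petersen.commonNeighbors a c).Subsingleton := by
  have hcard : 3 ≤ (a.1 ∪ c.1).card := by
    by_contra! h
    have ha := Finset.eq_of_subset_of_card_le (Finset.subset_union_left (s₂ := c.1))
      (by rw [a.2]; omega)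
    have hc := Finset.eq_of_subset_of_card_le (Finset.subset_union_right (s₁ := a.1))
      (by rw [c.2]; omega)
    exact hac (Subtype.ext (ha.trans hc.symm))
  have hcompl : ∀ b ∈ petersen.commonNeighbors a c, b.1 = (a.1 ∪ c.1)ᶜ := by
    intro b ⟨hab, hcb⟩
    refine Finset.eq_of_subset_of_card_le ?_ ?_
    · exact Finset.subset_compl_iff_disjoint_right.mpr
        (Finset.disjoint_union_right.mpr ⟨Disjoint.symm hab, Disjoint.symm hcb⟩)
    · rw [Finset.card_compl, b.2, Fintype.card_fin]
      omega
  exact fun b hb d hd ↦ Subtype.ext ((hcompl b hb).trans (hcompl d hd).symm)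

/-- For every Hist `T` of the Petersen graph, `P - E(T)` is a single
cycle of length 6. -/
theorem stmt8 (T : SimpleGraph {s : Finset (Fin 5) // s.card = 2})
    (hle : T ≤ petersen) (htree : T.IsTree)
    (hdeg : ∀ v, (T.neighborSet v).ncard = 1 ∨ (T.neighborSet v).ncard = 3) :
    ∃ (v : {s : Finset (Fin 5) // s.card = 2}) (c : (petersen \ T).Walk v v),
      c.IsCycle ∧ c.length = 6 ∧ (petersen \ T).edgeSet = {e | e ∈ c.edges} := by
  have hT : T.edgeSet.ncard = 9 := by
    have := htree.ncard_edgeSet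
    rw [Nat.card_eq_fintype_card, card_petersenVertex] at this
    omega
  have hcard : (petersen \ T).edgeSet.ncard = 6 := by
    rw [edgeSet_sdiff, Set.ncard_sdiff (edgeSet_mono hle), petersen_ncard_edgeSet, hT]
  have hgirth : ((5 : ℕ) : ℕ∞) ≤ (petersen \ T).egirth :=
    (five_le_egirth_of_cliqueFree_three petersen_cliqueFree_three
      petersen_commonNeighbors_subsingleton).trans (egirth_anti sdiff_le)
  have hcycles := isCycles_sdiff_of_ncard_neighborSet petersen_ncard_neighborSet hle hdeg
  obtain ⟨v, c, hc, hE⟩ := hcycles.exists_isCycle_edgeSet_eq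
    (Set.nonempty_of_ncard_ne_zero (by omega)) hgirth (by omega)
  exact ⟨v, c, hc, by rw [← hc.isTrail.ncard_edgeSet, ← hE, hcard], hE⟩
end

section
/- Let G be a cubic graph obtained from cubic graphs G1 and G2 by a dot product construction: delete two independent edges a1b1, a2b2 from G1, delete two adjacent vertices a3, b3 (with a3b3 an edge) from G2 where a3 has other neighbors x1,y1 and b3 has other neighbors x2,y2, and add edges a1x1, b1y1, a2x2, b2y2. If neither G1 nor G2 is 3-edge-colorable, then G is not 3-edge-colorable. -/
open SimpleGraph

/-- A graph is 3-edge-colorable if its edges can be properly colored with 3 colors. -/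
def Is3EdgeColorable {V : Type*} (G : SimpleGraph V) : Prop :=
  ∃ C : G.edgeSet → Fin 3,
    ∀ e₁ e₂ : G.edgeSet, e₁ ≠ e₂ →
      (∃ v, v ∈ (e₁ : Sym2 V) ∧ v ∈ (e₂ : Sym2 V)) → C e₁ ≠ C e₂

/-!
Fix a proper 3-edge-colouring of the dot product and a colour `a`. Every vertex of `G₁` sees
each colour exactly once, so the `a`-coloured edges inside `G₁` pair up its vertices, except
those whose `a`-coloured edge leaves `G₁` through one of the four crossing edges; hence, for every
colour, that number has the parity of `|V₁|`. For the colours `c₁, c₂` (from `a₁, b₁`) and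
`c₃, c₄` (from `a₂, b₂`) this leaves two possibilities. If `c₁ = c₂` and `c₃ = c₄`, giving
the edges `a₁b₁`, `a₂b₂` back these colours yields a colouring of `G₁`. Otherwise
`{c₁, c₂} = {c₃, c₄}` are two distinct colours, and giving `a₃b₃` the third one yields a
colouring of `G₂`.
-/

theorem Set.ne_of_ncard_triple_eq_three {α : Type*} {a b c : α}
    (h : ({a, b, c} : Set α).ncard = 3) : a ≠ b ∧ a ≠ c ∧ b ≠ c := by
  have hle : ∀ x y : α, ({x, y} : Set α).ncard ≤ 2 := fun x y =>
    (Set.ncard_insert_le x {y}).trans (by rw [Set.ncard_singleton])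
  refine ⟨?_, ?_, ?_⟩ <;> rintro rfl
  · have := hle a c; simp_all
  · have := hle a b; rw [show ({a, b, a} : Set α) = {a, b} by ext; simp; tauto] at h; omega
  · have := hle a b; simp_all

theorem Set.InjOn.exists_eq_of_ncard_eq {α β : Type*} [Finite α] {s : Set β} {f : β → α}
    (hf : s.InjOn f) (hs : s.ncard = Nat.card α) (a : α) : ∃ b ∈ s, f b = a := by
  have himage : f '' s = Set.univ :=
    Set.eq_of_subset_of_ncard_le (Set.subset_univ _) (by rw [Set.ncard_univ, hf.ncard_image, hs])
  simpa [← himage] using Set.mem_univ a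

theorem Set.injOn_triple {α β : Type*} {f : α → β} {a b c : α}
    (hab : f a ≠ f b) (hac : f a ≠ f c) (hbc : f b ≠ f c) : ({a, b, c} : Set α).InjOn f := by
  rintro u (rfl | rfl | rfl) w (rfl | rfl | rfl) h <;> first | rfl | simp_all [eq_comm]

namespace SimpleGraph

variable {V α : Type*} {G : SimpleGraph V}

/-- A proper edge colouring recorded on ordered pairs: `c v w` is the colour of the edge `vw`. -/
structure IsDartColoring (G : SimpleGraph V) (c : V → V → α) : Prop where
  injOn : ∀ v, (G.neighborSet v).InjOn (c v)
  symm : ∀ ⦃v w⦄, G.Adj v w → c v w = c w v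

/-- When `c` is injective at every vertex, the vertices outside this set are paired off by their
darts of colour `a`. -/
def unpaired (G : SimpleGraph V) (c : V → V → α) (a : α) : Set V :=
  {v | ∀ w, G.Adj v w → c v w = a → c w v ≠ a}

theorem mem_unpaired_iff {c : V → V → α} {v u : V} {a : α}
    (hinj : (G.neighborSet v).InjOn (c v)) (hu : G.Adj v u)
    (hsymm : ∀ w, G.Adj v w → w ≠ u → c v w = c w v) (ha : ∃ w, G.Adj v w ∧ c v w = a) :
    v ∈ G.unpaired c a ↔ c v u = a ∧ c u v ≠ a := by
  obtain ⟨w₀, hw₀, hw₀a⟩ := ha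
  refine ⟨fun h => ?_, fun ⟨hua, hva⟩ w hw hwa => ?_⟩
  · obtain rfl | hne := eq_or_ne w₀ u
    · exact ⟨hw₀a, h w₀ hw₀ hw₀a⟩
    · exact absurd ((hsymm w₀ hw₀ hne).symm.trans hw₀a) (h w₀ hw₀ hw₀a)
  · obtain rfl := hinj hw hu (hwa.trans hua.symm)
    exact hva

theorem ncard_unpaired_modEq [Finite V] {c : V → V → α}
    (hc : ∀ v, (G.neighborSet v).InjOn (c v)) (a : α) :
    (G.unpaired c a).ncard ≡ Nat.card V [MOD 2] := by
  classical
  have := Fintype.ofFinite V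
  -- `σ` swaps the ends of each edge coloured `a` from both sides; it fixes the unpaired vertices.
  let σ : V → V := fun v => if h : ∃ w, G.Adj v w ∧ c v w = a ∧ c w v = a then h.choose else v
  have hσ : ∀ v w, G.Adj v w → c v w = a → c w v = a → σ v = w := by
    intro v w h h₁ h₂
    have hex : ∃ w, G.Adj v w ∧ c v w = a ∧ c w v = a := ⟨w, h, h₁, h₂⟩
    simp only [σ, dif_pos hex]
    exact hc v hex.choose_spec.1 h (hex.choose_spec.2.1.trans h₁.symm)
  have hinv : Function.Involutive σ := by
    intro v
    by_cases hex : ∃ w, G.Adj v w ∧ c v w = a ∧ c w v = a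
    · obtain ⟨w, h, h₁, h₂⟩ := hex
      rw [hσ v w h h₁ h₂, hσ w v h.symm h₂ h₁]
    · simp only [σ, dif_neg hex]
  have hfix : ∀ v, σ v = v ↔ v ∈ G.unpaired c a := by
    refine fun v => ⟨fun hv w h h₁ h₂ => G.irrefl (v := v) ?_, fun hv => ?_⟩
    · rwa [← hσ v w h h₁ h₂, hv] at h
    · have hex : ¬∃ w, G.Adj v w ∧ c v w = a ∧ c w v = a := fun ⟨w, h, h₁, h₂⟩ => hv w h h₁ h₂
      simp only [σ, dif_neg hex]
  have hmod := Equiv.Perm.card_compl_support_modEq (p := 2) (n := 1) (σ := hinv.toPerm)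
    (Equiv.ext fun v => hinv v)
  have hset : G.unpaired c a = ↑(hinv.toPerm σ).supportᶜ := by
    ext v
    simp [← hfix]
  rwa [hset, Set.ncard_coe_finset, Nat.card_eq_fintype_card]

end SimpleGraph

open SimpleGraph

theorem is3EdgeColorable_iff_exists_isDartColoring {V : Type*} {G : SimpleGraph V} :
    Is3EdgeColorable G ↔ ∃ c : V → V → Fin 3, G.IsDartColoring c := by
  classical
  constructor
  · rintro ⟨C, hC⟩
    refine ⟨fun v w => if h : G.Adj v w then C ⟨s(v, w), h⟩ else 0, ⟨?_, ?_⟩⟩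
    · intro v w₁ h₁ w₂ h₂ heq
      by_contra hne
      simp only [dif_pos (show G.Adj v w₁ from h₁), dif_pos (show G.Adj v w₂ from h₂)] at heq
      exact hC _ _ (fun h => hne (Sym2.congr_right.mp (congrArg Subtype.val h)))
        ⟨v, Sym2.mem_mk_left _ _, Sym2.mem_mk_left _ _⟩ heq
    · intro v w h
      simp only [dif_pos h, dif_pos h.symm, Sym2.eq_swap]
  · rintro ⟨c, hc⟩
    have hrep : ∀ {p : V × V} {v w : V}, G.Adj v w → s(p.1, p.2) = s(v, w) → c p.1 p.2 = c v w := by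
      rintro ⟨a, b⟩ v w h hp
      rcases Sym2.eq_iff.mp hp with ⟨rfl, rfl⟩ | ⟨rfl, rfl⟩
      · rfl
      · exact hc.symm h.symm
    refine ⟨fun e => c (Quot.out e.1).1 (Quot.out e.1).2, ?_⟩
    rintro ⟨e₁, he₁⟩ ⟨e₂, he₂⟩ hne ⟨v, hv₁, hv₂⟩
    obtain ⟨w₁, rfl⟩ := Sym2.mem_iff_exists.mp hv₁
    obtain ⟨w₂, rfl⟩ := Sym2.mem_iff_exists.mp hv₂
    show c _ _ ≠ c _ _
    rw [hrep (p := Quot.out s(v, w₁)) he₁ (Quot.out_eq _),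
      hrep (p := Quot.out s(v, w₂)) he₂ (Quot.out_eq _)]
    intro h
    obtain rfl := hc.injOn v he₁ he₂ h
    exact hne rfl

theorem pair_colors_dichotomy (c₁ c₂ c₃ c₄ : Fin 3)
    (h : ∀ a b : Fin 3,
      (if c₁ = a ∧ c₂ ≠ a then 1 else 0) + (if c₂ = a ∧ c₁ ≠ a then 1 else 0) +
        (if c₃ = a ∧ c₄ ≠ a then 1 else 0) + (if c₄ = a ∧ c₃ ≠ a then 1 else 0) ≡
      (if c₁ = b ∧ c₂ ≠ b then 1 else 0) + (if c₂ = b ∧ c₁ ≠ b then 1 else 0) +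
        (if c₃ = b ∧ c₄ ≠ b then 1 else 0) + (if c₄ = b ∧ c₃ ≠ b then 1 else 0) [MOD 2]) :
    (c₁ = c₂ ∧ c₃ = c₄) ∨
      (c₁ ≠ c₂ ∧ c₃ ≠ c₄ ∧ ∃ c₀, c₀ ≠ c₁ ∧ c₀ ≠ c₂ ∧ c₀ ≠ c₃ ∧ c₀ ≠ c₄) := by
  revert c₁ c₂ c₃ c₄
  unfold Nat.ModEq
  decide

section LeftSide

variable {V₁ R α : Type*} {G₁ : SimpleGraph V₁} {G : SimpleGraph (V₁ ⊕ R)}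
  {a₁ b₁ a₂ b₂ : V₁} {p₁ q₁ p₂ q₂ : R}

/-- `G` contains `G₁` with the edges `a₁b₁`, `a₂b₂` removed on its left side, and joins
`a₁, b₁, a₂, b₂` to the right-hand vertices `p₁, q₁, p₂, q₂`. -/
structure IsDotProductLeft (G₁ : SimpleGraph V₁) (G : SimpleGraph (V₁ ⊕ R))
    (a₁ b₁ a₂ b₂ : V₁) (p₁ q₁ p₂ q₂ : R) : Prop where
  adj₁ : G₁.Adj a₁ b₁
  adj₂ : G₁.Adj a₂ b₂
  disjoint : a₁ ≠ a₂ ∧ a₁ ≠ b₂ ∧ b₁ ≠ a₂ ∧ b₁ ≠ b₂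
  adj_inl : ∀ ⦃u v⦄, G₁.Adj u v → s(u, v) ≠ s(a₁, b₁) → s(u, v) ≠ s(a₂, b₂) →
    G.Adj (.inl u) (.inl v)
  adj_a₁ : G.Adj (.inl a₁) (.inr p₁)
  adj_b₁ : G.Adj (.inl b₁) (.inr q₁)
  adj_a₂ : G.Adj (.inl a₂) (.inr p₂)
  adj_b₂ : G.Adj (.inl b₂) (.inr q₂)

open Classical in
/-- The neighbour of `inl v` in `G` that takes the place of the neighbour `w` of `v` in `G₁`. -/
noncomputable def rerouteLeft (a₁ b₁ a₂ b₂ : V₁) (p₁ q₁ p₂ q₂ : R) (v w : V₁) : V₁ ⊕ R :=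
  if s(v, w) = s(a₁, b₁) then .inr (if v = a₁ then p₁ else q₁)
  else if s(v, w) = s(a₂, b₂) then .inr (if v = a₂ then p₂ else q₂)
  else .inl w

theorem rerouteLeft_injective (hind : a₁ ≠ a₂ ∧ a₁ ≠ b₂ ∧ b₁ ≠ a₂ ∧ b₁ ≠ b₂) (v : V₁) :
    Function.Injective (rerouteLeft a₁ b₁ a₂ b₂ p₁ q₁ p₂ q₂ v) := by
  intro w₁ w₂ h
  unfold rerouteLeft at h
  split_ifs at h <;> simp_all <;> grind

theorem rerouteLeft_of_ne {v w : V₁} (h₁ : s(v, w) ≠ s(a₁, b₁)) (h₂ : s(v, w) ≠ s(a₂, b₂)) :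
    rerouteLeft a₁ b₁ a₂ b₂ p₁ q₁ p₂ q₂ v w = .inl w := by
  simp [rerouteLeft, h₁, h₂]

namespace IsDotProductLeft

theorem adj_rerouteLeft (hG : IsDotProductLeft G₁ G a₁ b₁ a₂ b₂ p₁ q₁ p₂ q₂) {v w : V₁}
    (h : G₁.Adj v w) : G.Adj (.inl v) (rerouteLeft a₁ b₁ a₂ b₂ p₁ q₁ p₂ q₂ v w) := by
  unfold rerouteLeft
  split_ifs with h₁ hv₁ h₂ hv₂
  · exact hv₁ ▸ hG.adj_a₁
  · obtain rfl : v = b₁ := by simp_all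
    exact hG.adj_b₁
  · exact hv₂ ▸ hG.adj_a₂
  · obtain rfl : v = b₂ := by simp_all
    exact hG.adj_b₂
  · exact hG.adj_inl h h₁ h₂

theorem rerouteLeft_cut (hG : IsDotProductLeft G₁ G a₁ b₁ a₂ b₂ p₁ q₁ p₂ q₂) :
    rerouteLeft a₁ b₁ a₂ b₂ p₁ q₁ p₂ q₂ a₁ b₁ = .inr p₁ ∧
    rerouteLeft a₁ b₁ a₂ b₂ p₁ q₁ p₂ q₂ b₁ a₁ = .inr q₁ ∧
    rerouteLeft a₁ b₁ a₂ b₂ p₁ q₁ p₂ q₂ a₂ b₂ = .inr p₂ ∧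
    rerouteLeft a₁ b₁ a₂ b₂ p₁ q₁ p₂ q₂ b₂ a₂ = .inr q₂ := by
  obtain ⟨h₁, h₂, h₃, h₄⟩ := hG.disjoint
  simp [rerouteLeft, hG.adj₁.ne.symm, hG.adj₂.ne.symm, h₁.symm, h₂.symm, h₃.symm, h₄.symm]

theorem injOn_comp_rerouteLeft (hG : IsDotProductLeft G₁ G a₁ b₁ a₂ b₂ p₁ q₁ p₂ q₂)
    {c : V₁ ⊕ R → V₁ ⊕ R → α} (hc : ∀ v, (G.neighborSet v).InjOn (c v)) (v : V₁) :
    (G₁.neighborSet v).InjOn (fun w => c (.inl v) (rerouteLeft a₁ b₁ a₂ b₂ p₁ q₁ p₂ q₂ v w)) :=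
  (hc (.inl v)).comp (rerouteLeft_injective hG.disjoint v).injOn fun _ hw => hG.adj_rerouteLeft hw

theorem eq_of_cut (hG : IsDotProductLeft G₁ G a₁ b₁ a₂ b₂ p₁ q₁ p₂ q₂) {v u w : V₁}
    (hu : s(v, u) = s(a₁, b₁) ∨ s(v, u) = s(a₂, b₂))
    (hw : s(v, w) = s(a₁, b₁) ∨ s(v, w) = s(a₂, b₂)) : u = w := by
  have := hG.disjoint
  simp only [Sym2.eq_iff] at hu hw
  grind

theorem symm_of_not_cut (hG : IsDotProductLeft G₁ G a₁ b₁ a₂ b₂ p₁ q₁ p₂ q₂)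
    {c : V₁ ⊕ R → V₁ ⊕ R → α} (hc : G.IsDartColoring c) {v w : V₁} (h : G₁.Adj v w)
    (e₁ : s(v, w) ≠ s(a₁, b₁)) (e₂ : s(v, w) ≠ s(a₂, b₂)) :
    c (.inl v) (rerouteLeft a₁ b₁ a₂ b₂ p₁ q₁ p₂ q₂ v w) =
      c (.inl w) (rerouteLeft a₁ b₁ a₂ b₂ p₁ q₁ p₂ q₂ w v) := by
  have e₁' : s(w, v) ≠ s(a₁, b₁) := by rwa [Sym2.eq_swap]
  have e₂' : s(w, v) ≠ s(a₂, b₂) := by rwa [Sym2.eq_swap]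
  rw [rerouteLeft_of_ne e₁ e₂, rerouteLeft_of_ne e₁' e₂']
  exact hc.symm (hG.adj_inl h e₁ e₂)

theorem is3EdgeColorable (hG : IsDotProductLeft G₁ G a₁ b₁ a₂ b₂ p₁ q₁ p₂ q₂)
    {c : V₁ ⊕ R → V₁ ⊕ R → Fin 3} (hc : G.IsDartColoring c)
    (h₁ : c (.inl a₁) (.inr p₁) = c (.inl b₁) (.inr q₁))
    (h₂ : c (.inl a₂) (.inr p₂) = c (.inl b₂) (.inr q₂)) : Is3EdgeColorable G₁ := by
  refine is3EdgeColorable_iff_exists_isDartColoring.2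
    ⟨_, hG.injOn_comp_rerouteLeft hc.injOn, fun v w h => ?_⟩
  obtain ⟨r₁, r₂, r₃, r₄⟩ := hG.rerouteLeft_cut
  by_cases e₁ : s(v, w) = s(a₁, b₁)
  · rcases Sym2.eq_iff.1 e₁ with ⟨rfl, rfl⟩ | ⟨rfl, rfl⟩ <;> simp [r₁, r₂, h₁]
  by_cases e₂ : s(v, w) = s(a₂, b₂)
  · rcases Sym2.eq_iff.1 e₂ with ⟨rfl, rfl⟩ | ⟨rfl, rfl⟩ <;> simp [r₃, r₄, h₂]
  exact hG.symm_of_not_cut hc h e₁ e₂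

theorem crossing_parity (hG : IsDotProductLeft G₁ G a₁ b₁ a₂ b₂ p₁ q₁ p₂ q₂) [Finite V₁]
    (hcubic : ∀ v, (G₁.neighborSet v).ncard = 3) {c : V₁ ⊕ R → V₁ ⊕ R → Fin 3}
    (hc : G.IsDartColoring c) (a : Fin 3) :
    (if c (.inl a₁) (.inr p₁) = a ∧ c (.inl b₁) (.inr q₁) ≠ a then 1 else 0) +
      (if c (.inl b₁) (.inr q₁) = a ∧ c (.inl a₁) (.inr p₁) ≠ a then 1 else 0) +
      (if c (.inl a₂) (.inr p₂) = a ∧ c (.inl b₂) (.inr q₂) ≠ a then 1 else 0) +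
      (if c (.inl b₂) (.inr q₂) = a ∧ c (.inl a₂) (.inr p₂) ≠ a then 1 else 0) ≡
      Nat.card V₁ [MOD 2] := by
  classical
  set c₁ : V₁ → V₁ → Fin 3 := fun v w => c (.inl v) (rerouteLeft a₁ b₁ a₂ b₂ p₁ q₁ p₂ q₂ v w)
  have hinj := hG.injOn_comp_rerouteLeft hc.injOn
  have hall : ∀ v, ∃ w, G₁.Adj v w ∧ c₁ v w = a := fun v =>
    (hinj v).exists_eq_of_ncard_eq (by simp [hcubic]) a
  have hcut : ∀ {v u}, G₁.Adj v u → (s(v, u) = s(a₁, b₁) ∨ s(v, u) = s(a₂, b₂)) →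
      (v ∈ G₁.unpaired c₁ a ↔ c₁ v u = a ∧ c₁ u v ≠ a) :=
    fun hvu hu => mem_unpaired_iff (hinj _) hvu (fun _ hw hne => hG.symm_of_not_cut hc hw
      (fun h => hne (hG.eq_of_cut (.inl h) hu)) (fun h => hne (hG.eq_of_cut (.inr h) hu))) (hall _)
  have hends : ∀ v ∈ G₁.unpaired c₁ a, v ∈ ({a₁, b₁, a₂, b₂} : Finset V₁) := by
    intro v hv
    by_contra hnot
    obtain ⟨w, hw, hwa⟩ := hall v
    have e₁ : s(v, w) ≠ s(a₁, b₁) := fun h => hnot (by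
      rcases Sym2.eq_iff.1 h with ⟨rfl, _⟩ | ⟨rfl, _⟩ <;> simp)
    have e₂ : s(v, w) ≠ s(a₂, b₂) := fun h => hnot (by
      rcases Sym2.eq_iff.1 h with ⟨rfl, _⟩ | ⟨rfl, _⟩ <;> simp)
    exact hv w hw hwa ((hG.symm_of_not_cut hc hw e₁ e₂).symm.trans hwa)
  have hset : G₁.unpaired c₁ a =
      ↑(({a₁, b₁, a₂, b₂} : Finset V₁).filter (· ∈ G₁.unpaired c₁ a)) := by
    ext v
    simpa using hends v
  obtain ⟨d₁, d₂, d₃, d₄⟩ := hG.disjoint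
  obtain ⟨r₁, r₂, r₃, r₄⟩ := hG.rerouteLeft_cut
  have hmod := ncard_unpaired_modEq hinj a
  rw [hset, Set.ncard_coe_finset, Finset.card_filter,
    Finset.sum_insert (by simp [hG.adj₁.ne, d₁, d₂]), Finset.sum_insert (by simp [d₃, d₄]),
    Finset.sum_insert (by simp [hG.adj₂.ne]), Finset.sum_singleton] at hmod
  simpa [hcut hG.adj₁ (.inl rfl), hcut hG.adj₁.symm (.inl Sym2.eq_swap), hcut hG.adj₂ (.inr rfl),
    hcut hG.adj₂.symm (.inr Sym2.eq_swap), c₁, r₁, r₂, r₃, r₄, add_assoc] using hmod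

end IsDotProductLeft
end LeftSide

section RightSide

variable {V₂ L α : Type*} {G₂ : SimpleGraph V₂} {a₃ b₃ x₁ y₁ x₂ y₂ : V₂}
  {G : SimpleGraph (L ⊕ {v : V₂ // v ≠ a₃ ∧ v ≠ b₃})} {a₁ b₁ a₂ b₂ : L}

/-- `G` contains `G₂` with the vertices `a₃, b₃` removed on its right side, and joins the other
neighbours `x₁, y₁` of `a₃` to `a₁, b₁` and those `x₂, y₂` of `b₃` to `a₂, b₂`. -/
structure IsDotProductRight (G₂ : SimpleGraph V₂) (a₃ b₃ : V₂)
    (G : SimpleGraph (L ⊕ {v : V₂ // v ≠ a₃ ∧ v ≠ b₃})) (x₁ y₁ x₂ y₂ : V₂) (a₁ b₁ a₂ b₂ : L) :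
    Prop where
  disjoint : a₁ ≠ a₂ ∧ a₁ ≠ b₂ ∧ b₁ ≠ a₂ ∧ b₁ ≠ b₂
  neighborSet_a₃ : G₂.neighborSet a₃ = {b₃, x₁, y₁}
  neighborSet_b₃ : G₂.neighborSet b₃ = {a₃, x₂, y₂}
  x₁_ne_y₁ : x₁ ≠ y₁
  x₂_ne_y₂ : x₂ ≠ y₂
  adj_inr : ∀ ⦃u v : {v : V₂ // v ≠ a₃ ∧ v ≠ b₃}⦄, G₂.Adj u v → G.Adj (.inr u) (.inr v)
  x₁_ne : x₁ ≠ a₃ ∧ x₁ ≠ b₃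
  y₁_ne : y₁ ≠ a₃ ∧ y₁ ≠ b₃
  x₂_ne : x₂ ≠ a₃ ∧ x₂ ≠ b₃
  y₂_ne : y₂ ≠ a₃ ∧ y₂ ≠ b₃
  adj_x₁ : G.Adj (.inl a₁) (.inr ⟨x₁, x₁_ne⟩)
  adj_y₁ : G.Adj (.inl b₁) (.inr ⟨y₁, y₁_ne⟩)
  adj_x₂ : G.Adj (.inl a₂) (.inr ⟨x₂, x₂_ne⟩)
  adj_y₂ : G.Adj (.inl b₂) (.inr ⟨y₂, y₂_ne⟩)

open Classical in
/-- The neighbour of `inr v` in `G` that takes the place of the neighbour `w` of `v` in `G₂`. -/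
noncomputable def rerouteRight (a₃ b₃ x₁ x₂ : V₂) (a₁ b₁ a₂ b₂ : L) (v w : V₂) :
    L ⊕ {v : V₂ // v ≠ a₃ ∧ v ≠ b₃} :=
  if ha : w = a₃ then .inl (if v = x₁ then a₁ else b₁)
  else if hb : w = b₃ then .inl (if v = x₂ then a₂ else b₂)
  else .inr ⟨w, ha, hb⟩

theorem rerouteRight_injective (hind : a₁ ≠ a₂ ∧ a₁ ≠ b₂ ∧ b₁ ≠ a₂ ∧ b₁ ≠ b₂) (v : V₂) :
    Function.Injective (rerouteRight a₃ b₃ x₁ x₂ a₁ b₁ a₂ b₂ v) := by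
  intro w₁ w₂ h
  unfold rerouteRight at h
  split_ifs at h <;> simp_all

namespace IsDotProductRight

theorem adj_rerouteRight (hG : IsDotProductRight G₂ a₃ b₃ G x₁ y₁ x₂ y₂ a₁ b₁ a₂ b₂)
    {v w : V₂} (hv : v ≠ a₃ ∧ v ≠ b₃) (h : G₂.Adj v w) :
    G.Adj (.inr ⟨v, hv⟩) (rerouteRight a₃ b₃ x₁ x₂ a₁ b₁ a₂ b₂ v w) := by
  unfold rerouteRight
  split_ifs with ha hx hb hx'
  · subst hx; exact hG.adj_x₁.symm
  · have : v ∈ G₂.neighborSet a₃ := ha ▸ h.symm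
    obtain rfl : v = y₁ := by simp_all [hG.neighborSet_a₃]
    exact hG.adj_y₁.symm
  · subst hx'; exact hG.adj_x₂.symm
  · have : v ∈ G₂.neighborSet b₃ := hb ▸ h.symm
    obtain rfl : v = y₂ := by simp_all [hG.neighborSet_b₃]
    exact hG.adj_y₂.symm
  · exact hG.adj_inr h

theorem is3EdgeColorable (hG : IsDotProductRight G₂ a₃ b₃ G x₁ y₁ x₂ y₂ a₁ b₁ a₂ b₂)
    {c : L ⊕ {v : V₂ // v ≠ a₃ ∧ v ≠ b₃} → L ⊕ {v : V₂ // v ≠ a₃ ∧ v ≠ b₃} → Fin 3}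
    (hc : G.IsDartColoring c) (c₀ : Fin 3)
    (h₁ : c (.inl a₁) (.inr ⟨x₁, hG.x₁_ne⟩) ≠ c (.inl b₁) (.inr ⟨y₁, hG.y₁_ne⟩))
    (h₂ : c (.inl a₂) (.inr ⟨x₂, hG.x₂_ne⟩) ≠ c (.inl b₂) (.inr ⟨y₂, hG.y₂_ne⟩))
    (ha₁ : c₀ ≠ c (.inl a₁) (.inr ⟨x₁, hG.x₁_ne⟩)) (hb₁ : c₀ ≠ c (.inl b₁) (.inr ⟨y₁, hG.y₁_ne⟩))
    (ha₂ : c₀ ≠ c (.inl a₂) (.inr ⟨x₂, hG.x₂_ne⟩)) (hb₂ : c₀ ≠ c (.inl b₂) (.inr ⟨y₂, hG.y₂_ne⟩)) :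
    Is3EdgeColorable G₂ := by
  classical
  -- A dart leaving `a₃` or `b₃` takes the colour of its reverse, and `a₃b₃` gets `c₀`.
  let c₂ : V₂ → V₂ → Fin 3 := fun v w =>
    if hv : v ≠ a₃ ∧ v ≠ b₃ then c (.inr ⟨v, hv⟩) (rerouteRight a₃ b₃ x₁ x₂ a₁ b₁ a₂ b₂ v w)
    else if hw : w ≠ a₃ ∧ w ≠ b₃ then c (.inr ⟨w, hw⟩) (rerouteRight a₃ b₃ x₁ x₂ a₁ b₁ a₂ b₂ w v)
    else c₀
  have hab : a₃ ≠ b₃ := (show G₂.Adj a₃ b₃ by simp [← mem_neighborSet, hG.neighborSet_a₃]).ne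
  refine is3EdgeColorable_iff_exists_isDartColoring.2 ⟨c₂, fun v => ?_, fun v w h => ?_⟩
  · by_cases hv : v ≠ a₃ ∧ v ≠ b₃
    · intro w₁ hw₁ w₂ hw₂ h
      simp only [c₂, dif_pos hv] at h
      exact rerouteRight_injective hG.disjoint v
        (hc.injOn _ (hG.adj_rerouteRight hv hw₁) (hG.adj_rerouteRight hv hw₂) h)
    obtain rfl | rfl : v = a₃ ∨ v = b₃ := by tauto
    · rw [hG.neighborSet_a₃]
      apply Set.injOn_triple <;>
        simp [c₂, rerouteRight, hab, hG.x₁_ne, hG.y₁_ne, hG.x₁_ne_y₁.symm, ← hc.symm hG.adj_x₁,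
          ← hc.symm hG.adj_y₁, ha₁, hb₁, h₁]
    · rw [hG.neighborSet_b₃]
      apply Set.injOn_triple <;>
        simp [c₂, rerouteRight, hab, hab.symm, hG.x₂_ne, hG.y₂_ne, hG.x₂_ne_y₂.symm,
          ← hc.symm hG.adj_x₂, ← hc.symm hG.adj_y₂, ha₂, hb₂, h₂]
  · by_cases hv : v ≠ a₃ ∧ v ≠ b₃ <;> by_cases hw : w ≠ a₃ ∧ w ≠ b₃
    · simp only [c₂, dif_pos hv, dif_pos hw, rerouteRight, hv.1, hv.2, hw.1, hw.2, dif_neg,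
        not_false_eq_true]
      exact hc.symm (hG.adj_inr (u := ⟨v, hv⟩) (v := ⟨w, hw⟩) h)
    · simp only [c₂, dif_pos hv, dif_neg hw]
    · simp only [c₂, dif_neg hv, dif_pos hw]
    · simp only [c₂, dif_neg hv, dif_neg hw]

end IsDotProductRight
end RightSide

theorem stmt13_general {V₁ V₂ : Type*} [Fintype V₁]
    (G₁ : SimpleGraph V₁) (G₂ : SimpleGraph V₂)
    (h₁ : ∀ v, (G₁.neighborSet v).ncard = 3)
    (h₂ : ∀ v, (G₂.neighborSet v).ncard = 3)
    (a₁ b₁ a₂ b₂ : V₁) (a₃ b₃ x₁ y₁ x₂ y₂ : V₂)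
    (he₁ : G₁.Adj a₁ b₁) (he₂ : G₁.Adj a₂ b₂)
    (hind : a₁ ≠ a₂ ∧ a₁ ≠ b₂ ∧ b₁ ≠ a₂ ∧ b₁ ≠ b₂)
    (hna : G₂.neighborSet a₃ = {b₃, x₁, y₁})
    (hnb : G₂.neighborSet b₃ = {a₃, x₂, y₂})
    (G : SimpleGraph (V₁ ⊕ {v : V₂ // v ≠ a₃ ∧ v ≠ b₃}))
    (hGll : ∀ u v : V₁, G.Adj (.inl u) (.inl v) ↔
      (G₁.Adj u v ∧ s(u, v) ≠ s(a₁, b₁) ∧ s(u, v) ≠ s(a₂, b₂)))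
    (hGrr : ∀ u v : {v : V₂ // v ≠ a₃ ∧ v ≠ b₃},
      G.Adj (.inr u) (.inr v) ↔ G₂.Adj u.1 v.1)
    (hGlr : ∀ (u : V₁) (v : {v : V₂ // v ≠ a₃ ∧ v ≠ b₃}),
      G.Adj (.inl u) (.inr v) ↔
        ((u = a₁ ∧ v.1 = x₁) ∨ (u = b₁ ∧ v.1 = y₁) ∨
         (u = a₂ ∧ v.1 = x₂) ∨ (u = b₂ ∧ v.1 = y₂)))
    (hc₁ : ¬ Is3EdgeColorable G₁) (hc₂ : ¬ Is3EdgeColorable G₂) :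
    ¬ Is3EdgeColorable G := by
  intro hG
  obtain ⟨c, hc⟩ := is3EdgeColorable_iff_exists_isDartColoring.1 hG
  obtain ⟨hb₃x₁, hb₃y₁, hx₁y₁⟩ := Set.ne_of_ncard_triple_eq_three (hna ▸ h₂ a₃)
  obtain ⟨ha₃x₂, ha₃y₂, hx₂y₂⟩ := Set.ne_of_ncard_triple_eq_three (hnb ▸ h₂ b₃)
  have hne : ∀ {v w : V₂}, w ∈ G₂.neighborSet v → w ≠ v := fun h => (G₂.ne_of_adj h).symm
  have hx₁ : x₁ ≠ a₃ ∧ x₁ ≠ b₃ := ⟨hne (by simp [hna]), hb₃x₁.symm⟩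
  have hy₁ : y₁ ≠ a₃ ∧ y₁ ≠ b₃ := ⟨hne (by simp [hna]), hb₃y₁.symm⟩
  have hx₂ : x₂ ≠ a₃ ∧ x₂ ≠ b₃ := ⟨ha₃x₂.symm, hne (by simp [hnb])⟩
  have hy₂ : y₂ ≠ a₃ ∧ y₂ ≠ b₃ := ⟨ha₃y₂.symm, hne (by simp [hnb])⟩
  have hL : IsDotProductLeft G₁ G a₁ b₁ a₂ b₂ ⟨x₁, hx₁⟩ ⟨y₁, hy₁⟩ ⟨x₂, hx₂⟩ ⟨y₂, hy₂⟩ :=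
    ⟨he₁, he₂, hind, fun u v h e₁ e₂ => (hGll u v).2 ⟨h, e₁, e₂⟩, (hGlr _ _).2 (by simp),
      (hGlr _ _).2 (by simp), (hGlr _ _).2 (by simp), (hGlr _ _).2 (by simp)⟩
  have hR : IsDotProductRight G₂ a₃ b₃ G x₁ y₁ x₂ y₂ a₁ b₁ a₂ b₂ :=
    ⟨hind, hna, hnb, hx₁y₁, hx₂y₂, fun u v h => (hGrr u v).2 h, hx₁, hy₁, hx₂, hy₂,
      hL.adj_a₁, hL.adj_b₁, hL.adj_a₂, hL.adj_b₂⟩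
  rcases pair_colors_dichotomy _ _ _ _ fun a b =>
      (hL.crossing_parity h₁ hc a).trans (hL.crossing_parity h₁ hc b).symm with
    ⟨e₁, e₂⟩ | ⟨n₁, n₂, c₀, h₀₁, h₀₂, h₀₃, h₀₄⟩
  · exact hc₁ (hL.is3EdgeColorable hc e₁ e₂)
  · exact hc₂ (hR.is3EdgeColorable hc c₀ n₁ n₂ h₀₁ h₀₂ h₀₃ h₀₄)

/-- The dot product of two non-3-edge-colorable cubic graphs is not
3-edge-colorable. The graph `G` on `V₁ ⊕ (V₂ \ {a₃, b₃})` is obtained by deleting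
the independent edges `a₁b₁`, `a₂b₂` from `G₁`, deleting the adjacent vertices
`a₃, b₃` from `G₂` (with remaining neighbors `x₁,y₁` resp. `x₂,y₂`), and adding the
edges `a₁x₁`, `b₁y₁`, `a₂x₂`, `b₂y₂`. -/
theorem stmt13 {V₁ V₂ : Type*} [Fintype V₁] [Fintype V₂]
    (G₁ : SimpleGraph V₁) (G₂ : SimpleGraph V₂)
    (h₁ : ∀ v, (G₁.neighborSet v).ncard = 3)
    (h₂ : ∀ v, (G₂.neighborSet v).ncard = 3)
    (a₁ b₁ a₂ b₂ : V₁) (a₃ b₃ x₁ y₁ x₂ y₂ : V₂)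
    (he₁ : G₁.Adj a₁ b₁) (he₂ : G₁.Adj a₂ b₂)
    (hind : a₁ ≠ a₂ ∧ a₁ ≠ b₂ ∧ b₁ ≠ a₂ ∧ b₁ ≠ b₂)
    (he₃ : G₂.Adj a₃ b₃)
    (hna : G₂.neighborSet a₃ = {b₃, x₁, y₁})
    (hnb : G₂.neighborSet b₃ = {a₃, x₂, y₂})
    (G : SimpleGraph (V₁ ⊕ {v : V₂ // v ≠ a₃ ∧ v ≠ b₃}))
    (hGll : ∀ u v : V₁, G.Adj (.inl u) (.inl v) ↔
      (G₁.Adj u v ∧ s(u, v) ≠ s(a₁, b₁) ∧ s(u, v) ≠ s(a₂, b₂)))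
    (hGrr : ∀ u v : {v : V₂ // v ≠ a₃ ∧ v ≠ b₃},
      G.Adj (.inr u) (.inr v) ↔ G₂.Adj u.1 v.1)
    (hGlr : ∀ (u : V₁) (v : {v : V₂ // v ≠ a₃ ∧ v ≠ b₃}),
      G.Adj (.inl u) (.inr v) ↔
        ((u = a₁ ∧ v.1 = x₁) ∨ (u = b₁ ∧ v.1 = y₁) ∨
         (u = a₂ ∧ v.1 = x₂) ∨ (u = b₂ ∧ v.1 = y₂)))
    (hc₁ : ¬ Is3EdgeColorable G₁) (hc₂ : ¬ Is3EdgeColorable G₂) :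
    ¬ Is3EdgeColorable G :=
  stmt13_general G₁ G₂ h₁ h₂ a₁ b₁ a₂ b₂ a₃ b₃ x₁ y₁ x₂ y₂ he₁ he₂ hind hna hnb G hGll hGrr hGlr hc₁
    hc₂
end
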